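/- Along any radially reduced future-directed null geodesic in the Schwarzschild exterior of mass M, the weight φ_+ satisfies d/ds φ_+ = +( E/(r^{1/2}(r+6M)^{1/2}Ω²) )·φ_+. Moreover, at every point of the null-shell one has the algebraic identity φ_+·φ_− = 27M²·E² − ℓ². -/

import Mathlib

open Real

/-- The trapping weight `φ₋ = (r/Ω)·p_{r*} + (r/Ω)·(1+6M/r)^{1/2}·(1−3M/r)·p_t`,
with `p_t = −E` and `Ω = (1 − 2M/r)^{1/2}`. -/
noncomputable def phiMinus (M E rv pv : ℝ) : ℝ :=
  rv / Real.sqrt (1 - 2 * M / rv) * pv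
    + rv / Real.sqrt (1 - 2 * M / rv) * Real.sqrt (1 + 6 * M / rv) * (1 - 3 * M / rv) * (-E)

/-- The trapping weight `φ₊ = (r/Ω)·p_{r*} − (r/Ω)·(1+6M/r)^{1/2}·(1−3M/r)·p_t`. -/
noncomputable def phiPlus (M E rv pv : ℝ) : ℝ :=
  rv / Real.sqrt (1 - 2 * M / rv) * pv
    - rv / Real.sqrt (1 - 2 * M / rv) * Real.sqrt (1 + 6 * M / rv) * (1 - 3 * M / rv) * (-E)

/-! With `h = r/Ω` and `w = h·(1 + 6M/r)^{1/2}·(1 − 3M/r)` one has `φ± = h·p_{r*} ± E·w`.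
As functions of `r` these satisfy `h' = κ·w`, `w' = κ·h` with `κ = 1/(r^{1/2}(r+6M)^{1/2}Ω²)`,
and `h² − w² = 27M²` since `(1 + 6x)(1 − 3x)² = 1 − 27x²(1 − 2x)`. Hence
`φ₊φ₋ = h²p_{r*}² − E²w² = 27M²E² − h²(E² − p_{r*}²)`, and `h²(E² − p_{r*}²) = h²Ω²ℓ²/r² = ℓ²`. Along a geodesic, `dφ₊/ds = κ·w·p_{r*}² + h·p_{r*}' + E·κ·h·p_{r*}`,
and the null-shell relation turns `κ·w·p_{r*}² + h·p_{r*}'` into `κ·w·E²`. -/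

lemma hasDerivAt_const_sub_div {r : ℝ} (a c : ℝ) (hr : r ≠ 0) :
    HasDerivAt (fun x => a - c / x) (c / r ^ 2) r :=
  (((hasDerivAt_inv hr).const_mul c).const_sub a).congr_deriv (by ring)

lemma hasDerivAt_const_add_div {r : ℝ} (a c : ℝ) (hr : r ≠ 0) :
    HasDerivAt (fun x => a + c / x) (-(c / r ^ 2)) r :=
  (((hasDerivAt_inv hr).const_mul c).const_add a).congr_deriv (by ring)

namespace Schwarzschild

noncomputable def radialWeight (M r : ℝ) : ℝ := r / √(1 - 2 * M / r)

noncomputable def energyWeight (M r : ℝ) : ℝ :=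
  radialWeight M r * √(1 + 6 * M / r) * (1 - 3 * M / r)

noncomputable def phiPlusRate (M r : ℝ) : ℝ := 1 / (√r * √(r + 6 * M) * (1 - 2 * M / r))

lemma phiPlus_eq (M E r p : ℝ) :
    phiPlus M E r p = radialWeight M r * p + E * energyWeight M r := by
  unfold phiPlus energyWeight radialWeight; ring

lemma phiMinus_eq (M E r p : ℝ) :
    phiMinus M E r p = radialWeight M r * p - E * energyWeight M r := by
  unfold phiMinus energyWeight radialWeight; ring

section

variable {M r : ℝ}

lemma one_sub_two_mul_div_pos (hM : 0 ≤ M) (hr : 2 * M < r) : 0 < 1 - 2 * M / r :=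
  sub_pos.2 <| (div_lt_one (by linarith)).2 hr

lemma one_add_six_mul_div_pos (hM : 0 ≤ M) (hr : 2 * M < r) : 0 < 1 + 6 * M / r := by
  have : 0 < r := by linarith
  positivity

lemma phiPlusRate_eq (hM : 0 ≤ M) (hr : 2 * M < r) :
    phiPlusRate M r = 1 / (r * √(1 + 6 * M / r) * (1 - 2 * M / r)) := by
  have hr0 : 0 < r := by linarith
  rw [phiPlusRate, show r + 6 * M = r * (1 + 6 * M / r) by field_simp, Real.sqrt_mul hr0.le,
    ← mul_assoc, Real.mul_self_sqrt hr0.le]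

lemma radialWeight_sq_mul (hM : 0 ≤ M) (hr : 2 * M < r) :
    radialWeight M r ^ 2 * (1 - 2 * M / r) = r ^ 2 := by
  have hΩ := one_sub_two_mul_div_pos hM hr
  rw [radialWeight, div_pow, Real.sq_sqrt hΩ.le]
  field_simp

lemma radialWeight_sq_sub_energyWeight_sq (hM : 0 ≤ M) (hr : 2 * M < r) :
    radialWeight M r ^ 2 - energyWeight M r ^ 2 = 27 * M ^ 2 := by
  have hr0 : 0 < r := by linarith
  have hσ := Real.sq_sqrt (one_add_six_mul_div_pos hM hr).le
  have hh := radialWeight_sq_mul hM hr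
  rw [energyWeight, mul_pow, mul_pow, hσ]
  field_simp at hh ⊢
  linear_combination (27 * M ^ 2) * hh

lemma phiPlusRate_mul_energyWeight (hM : 0 ≤ M) (hr : 2 * M < r) :
    phiPlusRate M r * energyWeight M r * (1 - 2 * M / r) = (r - 3 * M) / r ^ 2 * radialWeight M r := by
  have hr0 : 0 < r := by linarith
  have hσ := Real.sqrt_pos.2 (one_add_six_mul_div_pos hM hr)
  have : r - M * 2 ≠ 0 := by linarith
  rw [phiPlusRate_eq hM hr, energyWeight]
  field_simp

lemma hasDerivAt_radialWeight (hM : 0 ≤ M) (hr : 2 * M < r) :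
    HasDerivAt (radialWeight M) (phiPlusRate M r * energyWeight M r) r := by
  have hr0 : 0 < r := by linarith
  have hΩ := one_sub_two_mul_div_pos hM hr
  have hΩ' := Real.sqrt_pos.2 hΩ
  have hΩsq := Real.sq_sqrt hΩ.le
  refine ((hasDerivAt_id' r).fun_div
    ((hasDerivAt_const_sub_div 1 (2 * M) hr0.ne').sqrt hΩ.ne') hΩ'.ne').congr_deriv ?_
  rw [eq_div_of_mul_eq hΩ.ne' (phiPlusRate_mul_energyWeight hM hr), radialWeight]
  set Ω := √(1 - 2 * M / r)
  have : r - 2 * M ≠ 0 := by linarith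
  field_simp
  rw [hΩsq]
  field_simp
  ring

lemma hasDerivAt_energyWeight (hM : 0 ≤ M) (hr : 2 * M < r) :
    HasDerivAt (energyWeight M) (phiPlusRate M r * radialWeight M r) r := by
  have hr0 : 0 < r := by linarith
  have hΩ := one_sub_two_mul_div_pos hM hr
  have hσ := one_add_six_mul_div_pos hM hr
  have hσ' := Real.sqrt_pos.2 hσ
  have hσsq := Real.sq_sqrt hσ.le
  refine (((hasDerivAt_radialWeight hM hr).mul
    ((hasDerivAt_const_add_div 1 (6 * M) hr0.ne').sqrt hσ.ne')).mul
    (hasDerivAt_const_sub_div 1 (3 * M) hr0.ne')).congr_deriv ?_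
  rw [eq_div_of_mul_eq hΩ.ne' (phiPlusRate_mul_energyWeight hM hr), phiPlusRate_eq hM hr]
  simp only [Pi.mul_apply]
  set σ := √(1 + 6 * M / r)
  have : r - M * 2 ≠ 0 := by linarith
  field_simp
  rw [hσsq]
  field_simp
  ring

lemma phiPlus_mul_phiMinus {E ℓ p : ℝ} (hM : 0 ≤ M) (hr : 2 * M < r)
    (hnull : E ^ 2 = p ^ 2 + (1 - 2 * M / r) * ℓ ^ 2 / r ^ 2) :
    phiPlus M E r p * phiMinus M E r p = 27 * M ^ 2 * E ^ 2 - ℓ ^ 2 := by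
  have hr0 : 0 < r := by linarith
  have hℓ : radialWeight M r ^ 2 * ((1 - 2 * M / r) * ℓ ^ 2 / r ^ 2) = ℓ ^ 2 := by
    rw [← mul_div_assoc, ← mul_assoc, radialWeight_sq_mul hM hr]
    field_simp
  rw [phiPlus_eq, phiMinus_eq]
  linear_combination (-radialWeight M r ^ 2) * hnull
    + E ^ 2 * radialWeight_sq_sub_energyWeight_sq hM hr - hℓ

end

lemma hasDerivWithinAt_phiPlus {M E ℓ s : ℝ} {I : Set ℝ} {r p : ℝ → ℝ} (hM : 0 ≤ M)
    (hr : 2 * M < r s) (hdr : HasDerivWithinAt r (p s) I s)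
    (hdp : HasDerivWithinAt p ((r s - 3 * M) / r s ^ 4 * ℓ ^ 2) I s)
    (hnull : E ^ 2 = p s ^ 2 + (1 - 2 * M / r s) * ℓ ^ 2 / r s ^ 2) :
    HasDerivWithinAt (fun u => phiPlus M E (r u) (p u))
      (E * phiPlusRate M (r s) * phiPlus M E (r s) (p s)) I s := by
  simp only [phiPlus_eq]
  refine ((((hasDerivAt_radialWeight hM hr).comp_hasDerivWithinAt s hdr).mul hdp).add
    (((hasDerivAt_energyWeight hM hr).comp_hasDerivWithinAt s hdr).const_mul E)).congr_deriv ?_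
  simp only [Function.comp_apply]
  linear_combination (-(phiPlusRate M (r s) * energyWeight M (r s))) * hnull
    - (ℓ ^ 2 / r s ^ 2) * phiPlusRate_mul_energyWeight hM hr

end Schwarzschild

theorem schwarzschild_phiPlus_derivative_and_product
    (M : ℝ) (hM : 0 < M)
    (I : Set ℝ)
    (r prs : ℝ → ℝ) (E ℓ : ℝ)
    (hr2M : ∀ s ∈ I, 2 * M < r s)
    (hdr : ∀ s ∈ I, HasDerivWithinAt r (prs s) I s)
    (hdp : ∀ s ∈ I, HasDerivWithinAt prs ((r s - 3 * M) / (r s) ^ 4 * ℓ ^ 2) I s)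
    (hnull : ∀ s ∈ I, E ^ 2 = (prs s) ^ 2 + (1 - 2 * M / r s) * ℓ ^ 2 / (r s) ^ 2) :
    (∀ s ∈ I,
      HasDerivWithinAt (fun u => phiPlus M E (r u) (prs u))
        (E / (Real.sqrt (r s) * Real.sqrt (r s + 6 * M) * (1 - 2 * M / r s))
          * phiPlus M E (r s) (prs s)) I s) ∧
    (∀ rv pv E' ℓ' : ℝ, 2 * M < rv → 0 < E' → 0 ≤ ℓ' →
      E' ^ 2 = pv ^ 2 + (1 - 2 * M / rv) * ℓ' ^ 2 / rv ^ 2 →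
      phiPlus M E' rv pv * phiMinus M E' rv pv = 27 * M ^ 2 * E' ^ 2 - ℓ' ^ 2) := by
  refine ⟨fun s hs => ?_, fun rv pv E' ℓ' hrv _ _ hn => Schwarzschild.phiPlus_mul_phiMinus hM.le hrv hn⟩
  rw [div_eq_mul_one_div]
  exact Schwarzschild.hasDerivWithinAt_phiPlus hM.le (hr2M s hs) (hdr s hs) (hdp s hs) (hnull s hs)
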